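/- arXiv:2103.13345 — 2 statements merged into one kernel-verified Lean document; each statement's English description precedes it below -/
import Mathlib

section
/- Let ρ, γ > 1, τ > 2, κ ≥ 1, and set β = 1 + 1/(τκ). Then [(ρ'/(ρβ)')']^{1/(γβ)'} ≤ 2eρτ · κ^{1/γ'}, where x' = x/(x-1) denotes the Hölder conjugate. -/
/-!
Both conjugates simplify: `(ρ'/(ρβ)')' = (ρβ - 1)/(β - 1) ≤ ρβ' = ρ(τκ + 1) ≤ 2ρτκ`, and
`1/(γβ)' = 1/γ' + (β - 1)/(γβ) ≤ 1/γ' + 1/(τκ)`. Since the exponent is at most `1`, the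
factor `2ρτ ≥ 1` survives unchanged, and `κ^{1/(τκ)} ≤ κ^{1/κ} ≤ e` absorbs the excess
exponent of `κ`.
-/

/-- The Hölder conjugate `x' = x/(x-1)` of a real number `x`. -/
noncomputable def hconj (x : ℝ) : ℝ := x / (x - 1)

open Real

lemma one_div_hconj (x : ℝ) : 1 / hconj x = (x - 1) / x :=
  one_div_div x (x - 1)

lemma hconj_one_add_one_div {a : ℝ} (ha : a ≠ 0) : hconj (1 + 1 / a) = a + 1 := by
  unfold hconj
  field_simp
  ring

lemma hconj_hconj_div_hconj_mul {ρ β : ℝ} (hρ : ρ ≠ 0) (hρ1 : ρ ≠ 1) (hβ : β ≠ 0) (hβ1 : β ≠ 1) :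
    hconj (hconj ρ / hconj (ρ * β)) = (ρ * β - 1) / (β - 1) := by
  have hρ1' : ρ - 1 ≠ 0 := sub_ne_zero.mpr hρ1
  have hβ1' : β - 1 ≠ 0 := sub_ne_zero.mpr hβ1
  unfold hconj
  field_simp
  rw [show ρ * β - 1 - (ρ - 1) * β = β - 1 by ring, mul_div_cancel_right₀ _ hβ1']

lemma hconj_hconj_div_hconj_mul_le {ρ β : ℝ} (hρ : 0 < ρ) (hρ1 : ρ ≠ 1) (hβ : 1 < β) :
    hconj (hconj ρ / hconj (ρ * β)) ≤ ρ * hconj β := by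
  rw [hconj_hconj_div_hconj_mul hρ.ne' hρ1 (by positivity) hβ.ne', hconj, mul_div_assoc']
  gcongr
  linarith

lemma one_div_hconj_mul_le {γ β : ℝ} (hγ : 1 ≤ γ) (hβ : 1 ≤ β) :
    1 / hconj (γ * β) ≤ 1 / hconj γ + (β - 1) := by
  have hγβ : 1 ≤ γ * β := one_le_mul_of_one_le_of_one_le hγ hβ
  have hsplit : 1 / hconj (γ * β) = 1 / hconj γ + (β - 1) / (γ * β) := by
    rw [one_div_hconj, one_div_hconj]
    field_simp
    ring
  rw [hsplit]
  gcongr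
  exact div_le_self (by linarith) hγβ

lemma one_div_hconj_nonneg {x : ℝ} (hx : 1 ≤ x) : 0 ≤ 1 / hconj x := by
  rw [one_div_hconj]
  exact div_nonneg (by linarith) (by linarith)

lemma one_div_hconj_le_one {x : ℝ} (hx : 0 < x) : 1 / hconj x ≤ 1 := by
  rw [one_div_hconj]
  exact div_le_one_of_le₀ (by linarith) hx.le

lemma rpow_one_div_mul_self_le_exp_one {κ τ : ℝ} (hκ : 1 ≤ κ) (hτ : 1 ≤ τ) :
    κ ^ (1 / (τ * κ)) ≤ exp 1 := by
  have hκ0 : 0 < κ := by linarith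
  rw [rpow_def_of_pos hκ0, exp_le_exp, mul_one_div, div_le_one (by positivity)]
  nlinarith [log_le_sub_one_of_pos hκ0]

lemma rpow_one_div_hconj_mul_le {κ γ τ : ℝ} (hκ : 1 ≤ κ) (hγ : 1 ≤ γ) (hτ : 1 ≤ τ) :
    κ ^ (1 / hconj (γ * (1 + 1 / (τ * κ)))) ≤ κ ^ (1 / hconj γ) * exp 1 := by
  have hβ : 1 ≤ 1 + 1 / (τ * κ) := by
    simp only [le_add_iff_nonneg_right]
    positivity
  calc κ ^ (1 / hconj (γ * (1 + 1 / (τ * κ)))) ≤ κ ^ (1 / hconj γ + 1 / (τ * κ)) := by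
        gcongr
        simpa using one_div_hconj_mul_le hγ hβ
    _ ≤ κ ^ (1 / hconj γ) * exp 1 := by
        rw [rpow_add (by linarith)]
        gcongr
        exact rpow_one_div_mul_self_le_exp_one hκ hτ

lemma mul_rpow_le_mul_rpow {a b e : ℝ} (ha : 1 ≤ a) (hb : 0 ≤ b) (he : e ≤ 1) :
    (a * b) ^ e ≤ a * b ^ e := by
  rw [mul_rpow (by linarith) hb]
  gcongr
  exact rpow_le_self_of_one_le ha he

/-- For `ρ, γ > 1`, `τ > 2`, `κ ≥ 1` and `β = 1 + 1/(τκ)`, one has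
`[(ρ'/(ρβ)')']^{1/(γβ)'} ≤ 2·e·ρ·τ·κ^{1/γ'}`. -/
theorem stmt_2 (ρ γ τ κ β : ℝ) (hρ : 1 < ρ) (hγ : 1 < γ) (hτ : 2 < τ) (hκ : 1 ≤ κ)
    (hβ : β = 1 + 1 / (τ * κ)) :
    (hconj (hconj ρ / hconj (ρ * β))) ^ (1 / hconj (γ * β)) ≤
      2 * Real.exp 1 * ρ * τ * κ ^ (1 / hconj γ) := by
  have hτκ : 1 ≤ τ * κ := by nlinarith
  have hβ1 : 1 < β := by rw [hβ]; simp only [lt_add_iff_pos_right]; positivity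
  have hbase0 : 0 ≤ hconj (hconj ρ / hconj (ρ * β)) := by
    rw [hconj_hconj_div_hconj_mul (by positivity) hρ.ne' (by positivity) hβ1.ne']
    exact div_nonneg (by nlinarith) (by linarith)
  have hbase : hconj (hconj ρ / hconj (ρ * β)) ≤ 2 * ρ * τ * κ := by
    calc hconj (hconj ρ / hconj (ρ * β)) ≤ ρ * hconj β :=
          hconj_hconj_div_hconj_mul_le (by linarith) hρ.ne' hβ1
      _ = ρ * (τ * κ + 1) := by rw [hβ, hconj_one_add_one_div (by positivity)]
      _ ≤ 2 * ρ * τ * κ := by nlinarith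
  have hγβ : 1 < γ * β := one_lt_mul_of_lt_of_le hγ hβ1.le
  calc hconj (hconj ρ / hconj (ρ * β)) ^ (1 / hconj (γ * β))
      ≤ (2 * ρ * τ * κ) ^ (1 / hconj (γ * β)) :=
        rpow_le_rpow hbase0 hbase (one_div_hconj_nonneg hγβ.le)
    _ ≤ (2 * ρ * τ) * κ ^ (1 / hconj (γ * β)) :=
        mul_rpow_le_mul_rpow (by nlinarith) (by linarith) (one_div_hconj_le_one (by linarith))
    _ ≤ (2 * ρ * τ) * (κ ^ (1 / hconj γ) * exp 1) := by
        rw [hβ]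
        gcongr
        exact rpow_one_div_hconj_mul_le hκ hγ.le (by linarith)
    _ = 2 * exp 1 * ρ * τ * κ ^ (1 / hconj γ) := by ring
end

section
/- Let A and B be self-adjoint positive definite n×n real matrices and 0 < α < 1. Then the operator norm of A^α B^α satisfies |A^α B^α|_op ≤ C(n,α) |AB|_op^α for a constant C(n,α) depending only on n and α. -/
/-- The operator norm of a real `n×n` matrix, acting on Euclidean space. -/
noncomputable def opNorm {n : ℕ} (M : Matrix (Fin n) (Fin n) ℝ) : ℝ :=
  ‖Matrix.toEuclideanCLM (𝕜 := ℝ) M‖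

open Matrix WithLp
open scoped ComplexOrder

/-! For an eigenvector `v` of `B` with eigenvalue `μ ≥ 0`, the Hölder–McCarthy inequality
`‖A^α v‖ ≤ ‖A v‖^α ‖v‖^(1-α)` gives
`‖A^α B^α v‖ = μ^α ‖A^α v‖ ≤ ‖μ • A v‖^α = ‖A B v‖^α ≤ ‖A B‖^α` for unit `v`.
Expanding an arbitrary vector in an orthonormal eigenbasis of `B` loses at most a factor `√n`,
so `C = √n + 1` works. -/

theorem Real.sum_rpow_mul_le {ι : Type*} (s : Finset ι) {α : ℝ} (hα0 : 0 < α) (hα1 : α ≤ 1)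
    (w z : ι → ℝ) (hw : ∀ i, 0 ≤ w i) (hz : ∀ i, 0 ≤ z i) :
    ∑ i ∈ s, z i ^ α * w i ≤ (∑ i ∈ s, z i * w i) ^ α * (∑ i ∈ s, w i) ^ (1 - α) := by
  have h := Real.inner_le_weight_mul_Lp_of_nonneg s (p := α⁻¹) ((one_le_inv₀ hα0).2 hα1) w
    (fun i => z i ^ α) hw fun i => Real.rpow_nonneg (hz i) α
  simp only [inv_inv, Real.rpow_rpow_inv (hz _) hα0.ne'] at h
  simpa only [mul_comm] using h

namespace OrthonormalBasis

variable {ι 𝕜 E : Type*} [RCLike 𝕜] [NormedAddCommGroup E] [InnerProductSpace 𝕜 E] [Fintype ι]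
  (b : OrthonormalBasis ι 𝕜 E)

theorem norm_sq_eq_sum_norm_repr_sq (x : E) : ‖x‖ ^ 2 = ∑ i, ‖b.repr x i‖ ^ 2 := by
  rw [← b.repr.norm_map, EuclideanSpace.norm_sq_eq]

theorem repr_apply_of_apply_eq_smul {T : E →L[𝕜] E} {μ : ι → 𝕜} (hT : ∀ j, T (b j) = μ j • b j)
    (x : E) (i : ι) : b.repr (T x) i = μ i * b.repr x i := by
  classical
  conv_lhs => rw [← b.sum_repr x]
  simp [hT, b.repr_self, smul_smul, Pi.single_apply, mul_comm]

theorem norm_sq_apply_of_apply_eq_smul {T : E →L[𝕜] E} {μ : ι → 𝕜} (hT : ∀ j, T (b j) = μ j • b j)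
    (x : E) : ‖T x‖ ^ 2 = ∑ i, ‖μ i‖ ^ 2 * ‖b.repr x i‖ ^ 2 := by
  simp only [b.norm_sq_eq_sum_norm_repr_sq, b.repr_apply_of_apply_eq_smul hT, norm_mul, mul_pow]

theorem sum_norm_repr_le (x : E) : ∑ i, ‖b.repr x i‖ ≤ √(Fintype.card ι) * ‖x‖ := by
  rw [← Real.sqrt_sq (norm_nonneg x), ← Real.sqrt_mul (Nat.cast_nonneg _),
    b.norm_sq_eq_sum_norm_repr_sq]
  refine Real.le_sqrt_of_sq_le ?_
  simpa using sq_sum_le_card_mul_sum_sq (s := Finset.univ) (f := fun i => ‖b.repr x i‖)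

theorem opNorm_le_sqrt_card_mul {F : Type*} [NormedAddCommGroup F] [NormedSpace 𝕜 F]
    (T : E →L[𝕜] F) {M : ℝ} (hM : 0 ≤ M) (hTb : ∀ i, ‖T (b i)‖ ≤ M) :
    ‖T‖ ≤ √(Fintype.card ι) * M := by
  refine T.opNorm_le_bound (by positivity) fun x => ?_
  calc ‖T x‖ = ‖∑ i, b.repr x i • T (b i)‖ := by
        conv_lhs => rw [← b.sum_repr x]
        simp only [map_sum, map_smul]
    _ ≤ ∑ i, ‖b.repr x i‖ * M :=
        norm_sum_le_of_le _ fun i _ => (norm_smul_le _ _).trans (by gcongr; exact hTb i)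
    _ = (∑ i, ‖b.repr x i‖) * M := (Finset.sum_mul ..).symm
    _ ≤ √(Fintype.card ι) * ‖x‖ * M := by gcongr; exact b.sum_norm_repr_le x
    _ = √(Fintype.card ι) * M * ‖x‖ := by ring

end OrthonormalBasis

namespace Matrix.IsHermitian

variable {n 𝕜 : Type*} [RCLike 𝕜] [Fintype n] [DecidableEq n] {A : Matrix n n 𝕜}
  (hA : A.IsHermitian)

theorem cfc_id : hA.cfc id = A := (hA.cfc_eq id).symm.trans (_root_.cfc_id ℝ A hA.isSelfAdjoint)

theorem cfc_mulVec_eigenvectorBasis (f : ℝ → ℝ) (j : n) :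
    hA.cfc f *ᵥ ⇑(hA.eigenvectorBasis j) = f (hA.eigenvalues j) • ⇑(hA.eigenvectorBasis j) := by
  rw [IsHermitian.cfc, Unitary.conjStarAlgAut_apply, ← mulVec_mulVec, ← mulVec_mulVec,
    star_eigenvectorUnitary_mulVec, diagonal_mulVec_single, ← smul_eq_mul, Pi.single_smul,
    mulVec_smul, eigenvectorUnitary_mulVec, Function.comp_apply, Function.comp_apply,
    RCLike.real_smul_eq_coe_smul (K := 𝕜)]

theorem toEuclideanCLM_cfc_eigenvectorBasis (f : ℝ → ℝ) (j : n) :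
    toEuclideanCLM (𝕜 := 𝕜) (hA.cfc f) (hA.eigenvectorBasis j) =
      (f (hA.eigenvalues j) : 𝕜) • hA.eigenvectorBasis j := by
  apply WithLp.ofLp_injective
  rw [ofLp_toEuclideanCLM, hA.cfc_mulVec_eigenvectorBasis, ofLp_smul,
    RCLike.real_smul_eq_coe_smul (K := 𝕜)]

theorem toEuclideanCLM_eigenvectorBasis (j : n) :
    toEuclideanCLM (𝕜 := 𝕜) A (hA.eigenvectorBasis j) =
      (hA.eigenvalues j : 𝕜) • hA.eigenvectorBasis j := by
  simpa only [hA.cfc_id, id] using hA.toEuclideanCLM_cfc_eigenvectorBasis id j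

end Matrix.IsHermitian

namespace Matrix.PosSemidef

variable {n 𝕜 : Type*} [RCLike 𝕜] [Fintype n] [DecidableEq n] {A B : Matrix n n 𝕜} {α : ℝ}

/-- Hölder–McCarthy: in an eigenbasis of `A` this is Hölder's inequality for the weights
`‖xᵢ‖²`. -/
theorem norm_toEuclideanCLM_cfc_rpow_le (hA : A.PosSemidef) (hα0 : 0 < α) (hα1 : α ≤ 1)
    (x : EuclideanSpace 𝕜 n) :
    ‖toEuclideanCLM (𝕜 := 𝕜) (hA.1.cfc fun t => t ^ α) x‖ ≤
      ‖toEuclideanCLM (𝕜 := 𝕜) A x‖ ^ α * ‖x‖ ^ (1 - α) := by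
  have hx := hA.1.eigenvectorBasis.norm_sq_eq_sum_norm_repr_sq x
  have hAx := hA.1.eigenvectorBasis.norm_sq_apply_of_apply_eq_smul
    hA.1.toEuclideanCLM_eigenvectorBasis x
  have hAαx := hA.1.eigenvectorBasis.norm_sq_apply_of_apply_eq_smul
    (hA.1.toEuclideanCLM_cfc_eigenvectorBasis (fun t => t ^ α)) x
  rw [← pow_le_pow_iff_left₀ (norm_nonneg _) (by positivity) two_ne_zero, mul_pow,
    Real.rpow_pow_comm (norm_nonneg _), Real.rpow_pow_comm (norm_nonneg _), hx, hAx, hAαx]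
  simp only [RCLike.norm_ofReal, sq_abs, Real.rpow_pow_comm (hA.eigenvalues_nonneg _)]
  exact Real.sum_rpow_mul_le _ hα0 hα1 _ _ (fun _ => sq_nonneg _) fun _ => sq_nonneg _

theorem norm_toEuclideanCLM_cfc_rpow_mul_cfc_rpow_eigenvectorBasis_le (hA : A.PosSemidef)
    (hB : B.PosSemidef) (hα0 : 0 < α) (hα1 : α ≤ 1) (i : n) :
    ‖toEuclideanCLM (𝕜 := 𝕜) (hA.1.cfc (fun t => t ^ α) * hB.1.cfc (fun t => t ^ α))
      (hB.1.eigenvectorBasis i)‖ ≤ ‖toEuclideanCLM (𝕜 := 𝕜) (A * B)‖ ^ α := by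
  set v := hB.1.eigenvectorBasis i
  set μ := hB.1.eigenvalues i
  have hμ : 0 ≤ μ := hB.eigenvalues_nonneg i
  have hv : ‖v‖ = 1 := hB.1.eigenvectorBasis.orthonormal.1 i
  have hBv := hB.1.toEuclideanCLM_eigenvectorBasis i
  have hBαv := hB.1.toEuclideanCLM_cfc_eigenvectorBasis (fun t => t ^ α) i
  have hHM := hA.norm_toEuclideanCLM_cfc_rpow_le hα0 hα1 v
  rw [hv, Real.one_rpow, mul_one] at hHM
  calc _ = μ ^ α * ‖toEuclideanCLM (𝕜 := 𝕜) (hA.1.cfc fun t => t ^ α) v‖ := by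
        rw [map_mul, mul_apply_eq_comp, hBαv, map_smul, norm_smul,
          RCLike.norm_ofReal, abs_of_nonneg (Real.rpow_nonneg hμ α)]
    _ ≤ μ ^ α * ‖toEuclideanCLM (𝕜 := 𝕜) A v‖ ^ α := by gcongr
    _ = ‖toEuclideanCLM (𝕜 := 𝕜) (A * B) v‖ ^ α := by
        rw [map_mul, mul_apply_eq_comp, hBv, map_smul, norm_smul,
          RCLike.norm_ofReal, abs_of_nonneg hμ, Real.mul_rpow hμ (norm_nonneg _)]
    _ ≤ ‖toEuclideanCLM (𝕜 := 𝕜) (A * B)‖ ^ α := by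
        gcongr
        simpa [hv] using (toEuclideanCLM (𝕜 := 𝕜) (A * B)).le_opNorm v

end Matrix.PosSemidef

/-- Let `A`, `B` be self-adjoint positive definite matrices and `0 < α < 1`.  Then
`|A^α B^α|_op ≤ C(n,α) |AB|_op^α`, where `A^α` is the matrix power defined via the
spectral decomposition (Hermitian functional calculus). -/
theorem stmt_5 (n : ℕ) (α : ℝ) (hα0 : 0 < α) (hα1 : α < 1) :
    ∃ C > 0, ∀ (A B : Matrix (Fin n) (Fin n) ℝ) (hA : A.PosDef) (hB : B.PosDef),
      opNorm (hA.1.cfc (fun x => x ^ α) * hB.1.cfc (fun x => x ^ α)) ≤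
        C * opNorm (A * B) ^ α := by
  refine ⟨√n + 1, by positivity, fun A B hA hB => ?_⟩
  have hK : 0 ≤ opNorm (A * B) ^ α := Real.rpow_nonneg (norm_nonneg _) α
  calc opNorm (hA.1.cfc (fun x => x ^ α) * hB.1.cfc (fun x => x ^ α))
      ≤ √(Fintype.card (Fin n)) * opNorm (A * B) ^ α :=
        hB.1.eigenvectorBasis.opNorm_le_sqrt_card_mul _ hK fun i =>
          PosSemidef.norm_toEuclideanCLM_cfc_rpow_mul_cfc_rpow_eigenvectorBasis_le
            hA.posSemidef hB.posSemidef hα0 hα1.le i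
    _ ≤ (√n + 1) * opNorm (A * B) ^ α := by
        rw [Fintype.card_fin]
        gcongr
        linarith
end
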